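/- Any algebraic subvariety Σ of ℂᵈ is tame: there exists a holomorphic automorphism Φ of ℂᵈ (indeed the identity suffices after a linear change of coordinates) such that Φ(Σ) ⊂ {(z', z_d) : |z_d| ≤ 1 + |z'|}. In particular, for a proper algebraic subvariety Σ ⊊ ℂᵈ there is a ℂ-linear change of coordinates after which |z_d| ≤ C(1 + |z'|^k) on Σ for some constants C, k, and for Σ of degree-bounded defining equations in suitable (generic) coordinates the projection (z',z_d) ↦ z' restricted to Σ is proper. -/

import Mathlib

open MvPolynomial

private lemma isClosed_zl (m : ℕ) (I : Ideal (MvPolynomial (Fin (m+1)) ℂ)) :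
    IsClosed (zeroLocus ℂ I) := by
  have h : zeroLocus ℂ I = ⋂ p ∈ (I : Set (MvPolynomial (Fin (m+1)) ℂ)), {x | eval x p = 0} := by
    ext x
    simp [mem_zeroLocus_iff, Set.mem_iInter]
  rw [h]
  exact isClosed_biInter fun p _ => isClosed_eq (MvPolynomial.continuous_eval p) continuous_const

private noncomputable def shear (m : ℕ) (u : Fin (m+1) → ℂ) (hu : u (Fin.last m) = 0) :
    (Fin (m+1) → ℂ) ≃ₗ[ℂ] (Fin (m+1) → ℂ) where
  toFun w := w + w (Fin.last m) • u
  invFun w := w - w (Fin.last m) • u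
  map_add' w₁ w₂ := by funext i; simp [add_smul]; ring
  map_smul' c w := by funext i; simp [smul_smul]; ring
  left_inv w := by funext i; simp [hu]
  right_inv w := by funext i; simp [hu]

private noncomputable def scaleLast (m : ℕ) (c : ℂ) (hc : c ≠ 0) :
    (Fin (m+1) → ℂ) ≃ₗ[ℂ] (Fin (m+1) → ℂ) where
  toFun w i := if i = Fin.last m then c * w i else w i
  invFun w i := if i = Fin.last m then c⁻¹ * w i else w i
  map_add' w₁ w₂ := by funext i; by_cases hi : i = Fin.last m <;> simp [hi] <;> ring
  map_smul' a w := by funext i; by_cases hi : i = Fin.last m <;> simp [hi] <;> ring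
  left_inv w := by
    funext i; by_cases hi : i = Fin.last m <;> simp [hi]
    field_simp
  right_inv w := by
    funext i; by_cases hi : i = Fin.last m <;> simp [hi]
    field_simp

-- evaluating a one-variable specialization
private lemma eval_pi_eval₂ (m : ℕ) (g : Fin (m+1) → Polynomial ℂ)
    (f : MvPolynomial (Fin (m+1)) ℂ) (t : ℂ) :
    Polynomial.eval t (eval₂ (Polynomial.C) g f)
      = eval (fun i => Polynomial.eval t (g i)) f := by
  rw [show (Polynomial.eval t (eval₂ (Polynomial.C) g f))
      = (Polynomial.evalRingHom t) (eval₂ (Polynomial.C) g f) from rfl]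
  rw [eval₂_comp_left (Polynomial.evalRingHom t) Polynomial.C g f]
  have h : (Polynomial.evalRingHom t).comp (Polynomial.C) = RingHom.id ℂ := by
    ext r; simp
  rw [h]
  rfl

-- coefficient extraction: the `z_last^n` coefficient
private lemma pi_coeff (m n : ℕ) (hn : n ≠ 0) (f : MvPolynomial (Fin (m+1)) ℂ) :
    (eval₂ (Polynomial.C) (fun i => if i = Fin.last m then Polynomial.X else 0) f).coeff n
      = coeff (Finsupp.single (Fin.last m) n) f := by
  conv_lhs => rw [f.as_sum]
  rw [eval₂_sum, Polynomial.finset_sum_coeff]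
  rw [Finset.sum_eq_single (Finsupp.single (Fin.last m) n)]
  · rw [eval₂_monomial]
    rw [Finsupp.prod_single_index (by simp)]
    simp
  · intro d _ hdne
    rw [eval₂_monomial]
    by_cases hsupp : ∀ i ∈ d.support, i = Fin.last m
    · -- d supported on last; then d last ≠ n
      have hd : d = Finsupp.single (Fin.last m) (d (Fin.last m)) := by
        ext i
        by_cases hi : i = Fin.last m
        · subst hi; simp
        · rw [Finsupp.single_apply, if_neg (fun h => hi h.symm)]
          by_contra hne
          exact hi (hsupp i (Finsupp.mem_support_iff.mpr hne))
      have hprod : (d.prod fun i e => (if i = Fin.last m then Polynomial.X else (0 : Polynomial ℂ)) ^ e)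
          = Polynomial.X ^ (d (Fin.last m)) := by
        conv_lhs => rw [hd]
        by_cases h0 : d (Fin.last m) = 0
        · simp [h0]
        · rw [Finsupp.prod_single_index (by simp)]
          simp
      rw [hprod]
      have hne : d (Fin.last m) ≠ n := by
        intro h; exact hdne (by rw [hd, h])
      simp [Polynomial.coeff_C_mul, Polynomial.coeff_X_pow, hne, show ¬ n = d (Fin.last m) from fun h => hne h.symm]
    · push_neg at hsupp
      obtain ⟨i₀, hi₀mem, hi₀ne⟩ := hsupp
      have : (d.prod fun i e => (if i = Fin.last m then Polynomial.X else (0:Polynomial ℂ)) ^ e) = 0 := by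
        apply Finset.prod_eq_zero hi₀mem
        simp only []
        rw [if_neg hi₀ne, zero_pow (Finsupp.mem_support_iff.mp hi₀mem)]
      rw [this, mul_zero, Polynomial.coeff_zero]
  · intro hns
    rw [notMem_support_iff.mp hns]
    simp

-- coefficient extraction along the line direction v
private lemma rho_coeff (m n : ℕ) (v : Fin (m+1) → ℂ) (f : MvPolynomial (Fin (m+1)) ℂ) :
    (eval₂ (Polynomial.C) (fun i => Polynomial.C (v i) * Polynomial.X) f).coeff n
      = eval v (homogeneousComponent n f) := by
  conv_lhs => rw [f.as_sum]
  rw [eval₂_sum, Polynomial.finset_sum_coeff, homogeneousComponent_apply]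
  rw [map_sum, Finset.sum_filter]
  apply Finset.sum_congr rfl
  intro d _
  rw [eval₂_monomial, eval_monomial]
  have hprod : (d.prod fun i e => (Polynomial.C (v i) * Polynomial.X) ^ e)
      = Polynomial.C (d.prod fun i e => v i ^ e) * Polynomial.X ^ d.degree := by
    rw [Finsupp.prod, Finsupp.prod, Finsupp.degree_apply, map_prod]
    rw [← Finset.prod_pow_eq_pow_sum, ← Finset.prod_mul_distrib]
    apply Finset.prod_congr rfl
    intro i _
    rw [mul_pow, map_pow]
  rw [hprod, ← mul_assoc, ← Polynomial.C_mul, Polynomial.coeff_C_mul, Polynomial.coeff_X_pow]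
  by_cases hdeg : d.degree = n
  · rw [if_pos (hdeg.symm), if_pos hdeg, mul_one]
  · rw [if_neg (show ¬ n = d.degree from fun h => hdeg h.symm), if_neg hdeg, mul_zero]

private lemma main_bound (m : ℕ) (I : Ideal (MvPolynomial (Fin (m + 1)) ℂ))
    (hproper : zeroLocus ℂ I ≠ Set.univ) :
    ∃ (T : (Fin (m + 1) → ℂ) ≃ₗ[ℂ] (Fin (m + 1) → ℂ)) (C : ℝ), 1 ≤ C ∧
      ∀ z ∈ zeroLocus ℂ I,
        ‖(T z) (Fin.last m)‖ ≤ C * (1 + ‖(T z) ∘ Fin.castSucc‖) := by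
  -- get a nonzero polynomial in the ideal, witnessed by a point where it doesn't vanish
  obtain ⟨z₀, hz₀⟩ := (Set.ne_univ_iff_exists_notMem _).mp hproper
  rw [mem_zeroLocus_iff] at hz₀
  push_neg at hz₀
  obtain ⟨p, hpI, hpz₀⟩ := hz₀
  have hp0 : p ≠ 0 := fun h => hpz₀ (by rw [h, map_zero])
  set n := p.totalDegree with hn
  by_cases hn0 : n = 0
  · -- constant case : the zero locus is empty
    refine ⟨LinearEquiv.refl ℂ _, 1, le_refl _, fun z hz => absurd ?_ hpz₀⟩
    have hconst : ∀ d ∈ p.support, ∀ x, d x = 0 := (totalDegree_eq_zero_iff _ p).mp hn0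
    have heq : ∀ w : Fin (m+1) → ℂ, eval w p = eval z₀ p := by
      intro w
      rw [eval_eq', eval_eq']
      apply Finset.sum_congr rfl
      intro d hd
      have h1 : ∀ x, d x = 0 := hconst d hd
      simp [h1]
    change eval z₀ p = 0
    rw [← heq z]
    exact mem_zeroLocus_iff.mp hz p hpI
  · -- main case : positive total degree
    have hn1 : 1 ≤ n := Nat.one_le_iff_ne_zero.mpr hn0
    set h := homogeneousComponent n p with hhdef
    have hhom : h.IsHomogeneous n := homogeneousComponent_isHomogeneous n p
    -- the top homogeneous component is nonzero
    have hh0 : h ≠ 0 := by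
      have hsupp : p.support.Nonempty := support_nonempty.mpr hp0
      obtain ⟨d, hd, hdeg⟩ := Finset.exists_mem_eq_sup _ hsupp (fun s => s.sum fun _ e => e)
      intro hcon
      have h1 := coeff_homogeneousComponent (σ := Fin (m+1)) (R := ℂ) n p d
      have hdd : d.degree = n := by
        rw [hn, totalDegree] at *
        exact hdeg.symm
      rw [← hhdef, hcon, if_pos hdd] at h1
      rw [coeff_zero] at h1
      exact mem_support_iff.mp hd h1.symm
    -- scaling property of homogeneous polynomials
    have hscale : ∀ (c : ℂ) (x : Fin (m+1) → ℂ), eval (c • x) h = c ^ n * eval x h := by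
      intro c x
      rw [eval_eq', eval_eq', Finset.mul_sum]
      refine Finset.sum_congr rfl fun d hd => ?_
      have hdeg : ∑ i, d i = n := by
        have h1 := hhom (mem_support_iff.mp hd)
        rw [← h1]
        rw [show ((Finsupp.weight 1) d : ℕ) = d.degree from (Finsupp.degree_eq_weight_one (σ := Fin (m+1)) (R := ℕ) ▸ rfl)]
        rw [Finsupp.degree_apply]
        exact (Finset.sum_subset (Finset.subset_univ _)
          (fun i _ hi => Finsupp.notMem_support_iff.mp hi)).symm
      calc coeff d h * ∏ i, (c • x) i ^ d i
          = coeff d h * ∏ i, (c ^ d i * x i ^ d i) := by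
            apply congrArg
            exact Finset.prod_congr rfl fun i _ => by simp [mul_pow]
        _ = c ^ (∑ i, d i) * (coeff d h * ∏ i, x i ^ d i) := by
            rw [Finset.prod_mul_distrib, Finset.prod_pow_eq_pow_sum]
            ring
        _ = c ^ n * (coeff d h * ∏ i, x i ^ d i) := by rw [hdeg]
    -- find a direction with last coordinate 1 where h doesn't vanish
    have hex : ∃ v : Fin (m+1) → ℂ, v (Fin.last m) = 1 ∧ eval v h ≠ 0 := by
      by_contra hcon
      push_neg at hcon
      have hzero : ∀ w : Fin (m+1) → ℂ, eval w (h * X (Fin.last m)) = 0 := by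
        intro w
        rw [map_mul, eval_X]
        rcases eq_or_ne (w (Fin.last m)) 0 with h0 | h0
        · rw [h0, mul_zero]
        · have hv1 : ((w (Fin.last m))⁻¹ • w) (Fin.last m) = 1 := by
            simp [inv_mul_cancel₀ h0]
          have h2 := hscale (w (Fin.last m)) ((w (Fin.last m))⁻¹ • w)
          rw [smul_smul, mul_inv_cancel₀ h0, one_smul] at h2
          rw [h2, hcon _ hv1, mul_zero, zero_mul]
      have hX : h * X (Fin.last m) = 0 := MvPolynomial.funext (fun x => by rw [hzero x, map_zero])
      rcases mul_eq_zero.mp hX with h1 | h1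
      · exact hh0 h1
      · exact X_ne_zero (Fin.last m) h1
    obtain ⟨v, hv1, hveval⟩ := hex
    -- the shear sending the last basis vector to `v`
    set u : Fin (m+1) → ℂ := v - Pi.single (Fin.last m) 1 with hudef
    have hu : u (Fin.last m) = 0 := by simp [hudef, hv1]
    set B := shear m u hu with hBdef
    have hBapp : ∀ w : Fin (m+1) → ℂ, B w = w + w (Fin.last m) • u := fun w => rfl
    -- the substituted polynomial
    set g : Fin (m+1) → MvPolynomial (Fin (m+1)) ℂ :=
      fun i => X i + C (u i) * X (Fin.last m) with hgdef
    set q : MvPolynomial (Fin (m+1)) ℂ := eval₂ C g p with hqdef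
    have hevalq : ∀ w : Fin (m+1) → ℂ, eval w q = eval (B w) p := by
      intro w
      rw [hqdef, eval₂_comp_left (eval w) C g p]
      have h1 : (eval w).comp C = RingHom.id ℂ := by ext r; simp
      rw [h1]
      have h2 : (⇑(eval w) ∘ g : Fin (m+1) → ℂ) = B w := by
        funext i
        rw [hBapp]
        simp [hgdef, Function.comp]
        ring
      rw [h2]
      rfl
    -- total degree bound for q
    have hg1 : ∀ i, (g i).totalDegree ≤ 1 := by
      intro i
      refine le_trans (totalDegree_add _ _) ?_
      rw [max_le_iff]
      constructor
      · exact le_of_eq (totalDegree_X i)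
      · refine le_trans (totalDegree_mul _ _) ?_
        rw [totalDegree_C, totalDegree_X]
    have hdegq : q.totalDegree ≤ n := by
      rw [hqdef]
      conv_lhs => rw [p.as_sum]
      rw [eval₂_sum]
      refine le_trans (totalDegree_finset_sum _ _) ?_
      refine Finset.sup_le ?_
      intro d hd
      rw [eval₂_monomial]
      refine le_trans (totalDegree_mul _ _) ?_
      rw [totalDegree_C, zero_add, Finsupp.prod]
      refine le_trans (totalDegree_finset_prod _ _) ?_
      refine le_trans (Finset.sum_le_sum (fun i _ => le_trans (totalDegree_pow _ _)
        (Nat.mul_le_mul_left (d i) (hg1 i)))) ?_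
      simp only [Nat.mul_one]
      refine le_trans (le_of_eq ?_) (le_totalDegree hd)
      rfl
    -- the leading coefficient in the last variable
    have hc : coeff (Finsupp.single (Fin.last m) n) q = eval v h := by
      have hπρ : eval₂ (Polynomial.C) (fun i => if i = Fin.last m then Polynomial.X else 0) q
          = eval₂ (Polynomial.C) (fun i => Polynomial.C (v i) * Polynomial.X) p := by
        apply Polynomial.funext
        intro t
        rw [eval_pi_eval₂, eval_pi_eval₂]
        have hL : (fun i => Polynomial.eval t (if i = Fin.last m then Polynomial.X else 0))
            = fun i => if i = Fin.last m then t else 0 := by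
          funext i
          by_cases hi : i = Fin.last m <;> simp [hi]
        rw [hL, hevalq]
        have hR : B (fun i => if i = Fin.last m then t else 0) = fun i => v i * t := by
          rw [hBapp]
          funext i
          by_cases hi : i = Fin.last m
          · simp [hi, hu, hv1]
          · simp [hi, hudef, Pi.single_apply, fun hh => hi (hh : i = Fin.last m)]
            ring
        rw [hR]
        have hR2 : (fun i => Polynomial.eval t (Polynomial.C (v i) * Polynomial.X))
            = fun i => v i * t := by
          funext i; simp
        rw [hR2]
      have h1 := pi_coeff m n hn0 q
      have h2 := rho_coeff m n v p
      rw [← h1, hπρ, h2, ← hhdef]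
    have hc0 : coeff (Finsupp.single (Fin.last m) n) q ≠ 0 := by rw [hc]; exact hveval
    set c := coeff (Finsupp.single (Fin.last m) n) q with hcdef
    set S : ℝ := ∑ d ∈ q.support, ‖coeff d q‖ with hSdef
    have hS0 : 0 ≤ S := Finset.sum_nonneg fun d _ => norm_nonneg _
    have hcpos : 0 < ‖c‖ := norm_pos_iff.mpr hc0
    set CC : ℝ := 1 + S * (‖c‖)⁻¹ with hCCdef
    have hCC1 : 1 ≤ CC := le_add_of_nonneg_right (mul_nonneg hS0 (inv_nonneg.mpr (norm_nonneg _)))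
    refine ⟨B.symm, CC, hCC1, ?_⟩
    intro z hz
    set w : Fin (m+1) → ℂ := B.symm z with hwdef
    have hwq : eval w q = 0 := by
      rw [hevalq, hwdef, B.apply_symm_apply]
      exact mem_zeroLocus_iff.mp hz p hpI
    set t := ‖w (Fin.last m)‖ with htdef
    set r := ‖w ∘ Fin.castSucc‖ with hrdef
    have hr0 : (0:ℝ) ≤ r := norm_nonneg _
    have hle : ∀ i, i ≠ Fin.last m → ‖w i‖ ≤ r := by
      intro i hi
      have h1 : w i = (w ∘ Fin.castSucc) (i.castPred hi) := by
        simp [Fin.castSucc_castPred]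
      rw [h1]
      exact norm_le_pi_norm _ _
    by_cases hcase : t ≤ 1 + r
    · calc t ≤ 1 * (1 + r) := by rw [one_mul]; exact hcase
        _ ≤ CC * (1 + r) := mul_le_mul_of_nonneg_right hCC1 (by positivity)
    · push_neg at hcase
      have h1t : (1:ℝ) ≤ t := le_of_lt (lt_of_le_of_lt (by linarith) hcase)
      have ht0 : (0:ℝ) < t := lt_of_lt_of_le one_pos h1t
      have htr : r < t := lt_of_le_of_lt (by linarith) hcase
      have htall : ∀ i, ‖w i‖ ≤ t := by
        intro i
        by_cases hi : i = Fin.last m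
        · rw [hi]
        · exact le_of_lt (lt_of_le_of_lt (hle i hi) htr)
      set α₀ := Finsupp.single (Fin.last m) n with hα₀def
      have hα₀mem : α₀ ∈ q.support := mem_support_iff.mpr hc0
      have hsum0 : ∑ d ∈ q.support, coeff d q * ∏ i, w i ^ d i = 0 := by
        rw [← eval_eq']; exact hwq
      rw [← Finset.add_sum_erase _ _ hα₀mem] at hsum0
      have hsplit : c * ∏ i, w i ^ α₀ i
          = - ∑ d ∈ q.support.erase α₀, coeff d q * ∏ i, w i ^ d i :=
        eq_neg_of_add_eq_zero_left hsum0
      have hprodα₀ : ∏ i, w i ^ α₀ i = w (Fin.last m) ^ n := by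
        rw [hα₀def]
        have hone : ∀ i, w i ^ (Finsupp.single (Fin.last m) n) i
            = if Fin.last m = i then w i ^ n else 1 := by
          intro i
          rw [Finsupp.single_apply]
          by_cases hi : Fin.last m = i <;> simp [hi]
        rw [Finset.prod_congr rfl (fun i _ => hone i), Finset.prod_ite_eq]
        simp
      -- bound each term of the sum
      have hterm : ∀ d ∈ q.support.erase α₀,
          ∏ i, ‖w i‖ ^ d i ≤ t ^ (n-1) * (1 + r) := by
        intro d hd
        have hdmem : d ∈ q.support := Finset.mem_of_mem_erase hd
        have hdne : d ≠ α₀ := Finset.ne_of_mem_erase hd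
        have hdsum : ∑ i, d i ≤ n := by
          refine le_trans (le_of_eq (Finset.sum_subset (Finset.subset_univ _)
            (fun i _ hi => Finsupp.notMem_support_iff.mp hi)).symm)
            (le_trans (le_totalDegree hdmem) hdegq)
        rcases lt_or_eq_of_le hdsum with hlt | heq
        · calc ∏ i, ‖w i‖ ^ d i
              ≤ ∏ i, t ^ d i := Finset.prod_le_prod (fun i _ => by positivity)
                (fun i _ => pow_le_pow_left₀ (norm_nonneg _) (htall i) _)
            _ = t ^ (∑ i, d i) := Finset.prod_pow_eq_pow_sum _ _ _
            _ ≤ t ^ (n-1) := pow_le_pow_right₀ h1t (by omega)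
            _ ≤ t ^ (n-1) * (1 + r) := le_mul_of_one_le_right (by positivity) (by linarith)
        · have hex2 : ∃ i₀, i₀ ≠ Fin.last m ∧ d i₀ ≠ 0 := by
            by_contra hcon2
            push_neg at hcon2
            apply hdne
            have hdeq : d = Finsupp.single (Fin.last m) (d (Fin.last m)) := by
              ext i
              by_cases hi : i = Fin.last m
              · subst hi; simp
              · rw [Finsupp.single_apply, if_neg (fun hh => hi hh.symm), hcon2 i hi]
            have hsum2 : ∑ i, d i = d (Fin.last m) :=
              Finset.sum_eq_single (Fin.last m) (fun i _ hi => hcon2 i hi)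
                (fun hni => absurd (Finset.mem_univ _) hni)
            have hdn : d (Fin.last m) = n := by rw [← hsum2]; exact heq
            rw [hα₀def, hdeq, hdn]
          obtain ⟨i₀, hi₀ne, hi₀pos⟩ := hex2
          calc ∏ i, ‖w i‖ ^ d i
              = ‖w i₀‖ ^ d i₀ * ∏ i ∈ Finset.univ.erase i₀, ‖w i‖ ^ d i :=
                (Finset.mul_prod_erase _ _ (Finset.mem_univ i₀)).symm
            _ ≤ (r * t ^ (d i₀ - 1)) * ∏ i ∈ Finset.univ.erase i₀, t ^ d i := by
                refine mul_le_mul ?_ (Finset.prod_le_prod (fun i _ => by positivity)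
                  (fun i _ => pow_le_pow_left₀ (norm_nonneg _) (htall i) _))
                  (Finset.prod_nonneg fun i _ => by positivity) (by positivity)
                have hsplit2 : ‖w i₀‖ ^ d i₀
                    = ‖w i₀‖ * ‖w i₀‖ ^ (d i₀ - 1) := by
                  conv_lhs => rw [show d i₀ = 1 + (d i₀ - 1) by omega]
                  rw [pow_add, pow_one]
                rw [hsplit2]
                exact mul_le_mul (hle i₀ hi₀ne)
                  (pow_le_pow_left₀ (norm_nonneg _) (htall i₀) _)
                  (by positivity) hr0
            _ = r * t ^ ((d i₀ - 1) + ∑ i ∈ Finset.univ.erase i₀, d i) := by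
                rw [Finset.prod_pow_eq_pow_sum, mul_assoc, ← pow_add]
            _ = r * t ^ (n - 1) := by
                have haux : d i₀ + ∑ i ∈ Finset.univ.erase i₀, d i = ∑ i, d i :=
                  Finset.add_sum_erase Finset.univ (fun i => d i) (Finset.mem_univ i₀)
                congr 2
                omega
            _ ≤ t ^ (n-1) * (1 + r) := by nlinarith [pow_nonneg (le_of_lt ht0) (n-1)]
      -- put it together
      have habs : ‖c‖ * t ^ n ≤ S * (t ^ (n-1) * (1 + r)) := by
        have h1 : ‖c‖ * t ^ n = ‖c * ∏ i, w i ^ α₀ i‖ := by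
          rw [hprodα₀, norm_mul, norm_pow, htdef]
        rw [h1, hsplit, norm_neg]
        refine le_trans (norm_sum_le _ _) ?_
        have h2 : ∀ d ∈ q.support.erase α₀,
            ‖coeff d q * ∏ i, w i ^ d i‖
              ≤ ‖coeff d q‖ * (t ^ (n-1) * (1 + r)) := by
          intro d hd
          rw [norm_mul, norm_prod]
          simp only [norm_pow]
          exact mul_le_mul_of_nonneg_left (hterm d hd) (norm_nonneg _)
        refine le_trans (Finset.sum_le_sum h2) ?_
        rw [← Finset.sum_mul]
        refine mul_le_mul_of_nonneg_right ?_ (by positivity)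
        rw [hSdef]
        exact Finset.sum_le_sum_of_subset_of_nonneg (Finset.erase_subset _ _)
          (fun d _ _ => norm_nonneg _)
      have hfin : ‖c‖ * t ≤ S * (1 + r) := by
        have hpow : t ^ n = t ^ (n-1) * t := by
          rw [← pow_succ]
          congr 1
          omega
        rw [hpow] at habs
        have hp1 : (0:ℝ) < t ^ (n-1) := pow_pos ht0 _
        nlinarith
      calc t = (‖c‖)⁻¹ * (‖c‖ * t) := by field_simp
        _ ≤ (‖c‖)⁻¹ * (S * (1 + r)) :=
            mul_le_mul_of_nonneg_left hfin (by positivity)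
        _ = (S * (‖c‖)⁻¹) * (1 + r) := by ring
        _ ≤ CC * (1 + r) := mul_le_mul_of_nonneg_right (by rw [hCCdef]; linarith) (by positivity)

private lemma scaleLast_apply (m : ℕ) (c : ℂ) (hc : c ≠ 0) (w : Fin (m+1) → ℂ) (i : Fin (m+1)) :
    scaleLast m c hc w i = if i = Fin.last m then c * w i else w i := rfl

/-- Any proper algebraic subvariety `Σ = zeroLocus ℂ I ⊊ ℂᵈ`
(`d = m + 1` coordinates, `z = (z', z_d)`) is tame: there is a holomorphic
automorphism `Φ` of `ℂᵈ` with `Φ(Σ) ⊆ {(z', z_d) : |z_d| ≤ 1 + ‖z'‖}`.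
In particular there is a `ℂ`-linear change of coordinates `T` after which
`|z_d| ≤ C (1 + ‖z'‖^k)` on `Σ` for some constants `C, k`, and in suitable linear
coordinates the projection `(z', z_d) ↦ z'` restricted to `Σ` is proper. -/
theorem algebraic_subvarieties_are_tame (m : ℕ)
    (I : Ideal (MvPolynomial (Fin (m + 1)) ℂ))
    (hproper : zeroLocus ℂ I ≠ Set.univ) :
    -- tameness via a holomorphic automorphism of `ℂᵈ`
    (∃ Φ : (Fin (m + 1) → ℂ) ≃ (Fin (m + 1) → ℂ),
      Differentiable ℂ (Φ : (Fin (m + 1) → ℂ) → (Fin (m + 1) → ℂ)) ∧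
      Differentiable ℂ (Φ.symm : (Fin (m + 1) → ℂ) → (Fin (m + 1) → ℂ)) ∧
      ∀ z ∈ zeroLocus ℂ I,
        ‖Φ z (Fin.last m)‖ ≤ 1 + ‖(Φ z) ∘ Fin.castSucc‖) ∧
    -- polynomial growth bound after a linear change of coordinates
    (∃ T : (Fin (m + 1) → ℂ) ≃ₗ[ℂ] (Fin (m + 1) → ℂ), ∃ C : ℝ, ∃ k : ℕ,
      ∀ z ∈ zeroLocus ℂ I,
        ‖T z (Fin.last m)‖ ≤ C * (1 + ‖(T z) ∘ Fin.castSucc‖ ^ k)) ∧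
    -- properness of the projection in suitable linear coordinates
    (∃ T : (Fin (m + 1) → ℂ) ≃ₗ[ℂ] (Fin (m + 1) → ℂ),
      IsProperMap (fun p : zeroLocus ℂ I => (T (p : Fin (m + 1) → ℂ)) ∘ Fin.castSucc)) := by
  obtain ⟨T, C, hC, hbound⟩ := main_bound m I hproper
  have hCpos : (0:ℝ) < C := lt_of_lt_of_le one_pos hC
  have hCne : ((C:ℝ) : ℂ) ≠ 0 := by
    rw [Complex.ofReal_ne_zero]
    exact ne_of_gt hCpos
  refine ⟨?_, ⟨T, C, 1, fun z hz => by simpa using hbound z hz⟩, ?_⟩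
  · -- Part 1 : the automorphism
    set E := T.trans (scaleLast m ((C:ℂ))⁻¹ (inv_ne_zero hCne)) with hEdef
    refine ⟨E.toEquiv, ?_, ?_, ?_⟩
    · have h1 : (⇑E.toEquiv : (Fin (m+1) → ℂ) → (Fin (m+1) → ℂ))
          = ⇑(LinearMap.toContinuousLinearMap E.toLinearMap) := by
        funext x
        simp [LinearMap.coe_toContinuousLinearMap']
      rw [h1]
      exact (LinearMap.toContinuousLinearMap E.toLinearMap).differentiable
    · have h1 : (⇑E.toEquiv.symm : (Fin (m+1) → ℂ) → (Fin (m+1) → ℂ))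
          = ⇑(LinearMap.toContinuousLinearMap E.symm.toLinearMap) := by
        funext x
        simp [LinearMap.coe_toContinuousLinearMap']
      rw [h1]
      exact (LinearMap.toContinuousLinearMap E.symm.toLinearMap).differentiable
    · intro z hz
      have hlast : E.toEquiv z (Fin.last m) = ((C:ℂ))⁻¹ * (T z (Fin.last m)) := by
        rw [show E.toEquiv z = E z from rfl, hEdef, LinearEquiv.trans_apply, scaleLast_apply,
          if_pos rfl]
      have hcast : (E.toEquiv z) ∘ Fin.castSucc = (T z) ∘ Fin.castSucc := by
        funext i
        show E z (Fin.castSucc i) = _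
        rw [hEdef, LinearEquiv.trans_apply, scaleLast_apply,
          if_neg (Fin.castSucc_lt_last i).ne]
        rfl
      calc ‖E.toEquiv z (Fin.last m)‖
          = C⁻¹ * ‖T z (Fin.last m)‖ := by
            rw [hlast, norm_mul, norm_inv, Complex.norm_real, Real.norm_eq_abs, abs_of_pos hCpos]
        _ ≤ C⁻¹ * (C * (1 + ‖(T z) ∘ Fin.castSucc‖)) :=
            mul_le_mul_of_nonneg_left (hbound z hz) (inv_nonneg.mpr (le_of_lt hCpos))
        _ = 1 + ‖(T z) ∘ Fin.castSucc‖ := by field_simp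
        _ = 1 + ‖(E.toEquiv z) ∘ Fin.castSucc‖ := by rw [hcast]
  · -- Part 3 : properness
    refine ⟨T, ?_⟩
    have hTcont : Continuous (⇑T : (Fin (m+1) → ℂ) → (Fin (m+1) → ℂ)) := by
      have h := (LinearMap.toContinuousLinearMap T.toLinearMap).continuous
      simpa [LinearMap.coe_toContinuousLinearMap'] using h
    set g : (Fin (m+1) → ℂ) → (Fin m → ℂ) := fun z => (T z) ∘ Fin.castSucc with hgdef
    have hgcont : Continuous g :=
      continuous_pi fun i => (continuous_apply (Fin.castSucc i)).comp hTcont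
    rw [isProperMap_iff_isCompact_preimage]
    constructor
    · exact hgcont.comp continuous_subtype_val
    · intro K hK
      have hcompact : IsCompact (g ⁻¹' K ∩ zeroLocus ℂ I) := by
        rw [Metric.isCompact_iff_isClosed_bounded]
        constructor
        · exact (hK.isClosed.preimage hgcont).inter (isClosed_zl m I)
        · obtain ⟨R, hR⟩ := isBounded_iff_forall_norm_le.mp hK.isBounded
          set R' := max R 0 with hR'def
          have hR'0 : (0:ℝ) ≤ R' := le_max_right R 0
          rw [isBounded_iff_forall_norm_le]
          set M := ‖LinearMap.toContinuousLinearMap T.symm.toLinearMap‖ with hMdef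
          refine ⟨M * max (C * (1 + R')) R', ?_⟩
          rintro z ⟨hzK, hzI⟩
          have hb := hbound z hzI
          have hr : ‖(T z) ∘ Fin.castSucc‖ ≤ R' := le_max_of_le_left (hR _ hzK)
          have h1 : ‖T z‖ ≤ max (C * (1 + R')) R' := by
            rw [pi_norm_le_iff_of_nonneg (le_max_of_le_right hR'0)]
            intro i
            by_cases hi : i = Fin.last m
            · subst hi
              refine le_max_of_le_left ?_
              refine le_trans hb ?_
              have h2 : (1 + ‖(T z) ∘ Fin.castSucc‖) ≤ 1 + R' := by linarith
              exact mul_le_mul_of_nonneg_left h2 (le_of_lt hCpos)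
            · have h3 : (T z) i = ((T z) ∘ Fin.castSucc) (i.castPred hi) := by
                simp [Fin.castSucc_castPred]
              rw [h3]
              exact le_max_of_le_right (le_trans (norm_le_pi_norm _ _) hr)
          calc ‖z‖ = ‖T.symm (T z)‖ := by rw [T.symm_apply_apply]
            _ = ‖(LinearMap.toContinuousLinearMap T.symm.toLinearMap) (T z)‖ := by
                rw [LinearMap.coe_toContinuousLinearMap']
                rfl
            _ ≤ M * ‖T z‖ := ContinuousLinearMap.le_opNorm _ _
            _ ≤ M * max (C * (1 + R')) R' :=
                mul_le_mul_of_nonneg_left h1 (norm_nonneg _)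
      have hsub : ((fun p : zeroLocus ℂ I => g ↑p) ⁻¹' K)
          = (Subtype.val : zeroLocus ℂ I → _) ⁻¹' (g ⁻¹' K ∩ zeroLocus ℂ I) := by
        ext ⟨x, hx⟩
        simp [hx]
      rw [show (fun p : zeroLocus ℂ I => (T (p : Fin (m + 1) → ℂ)) ∘ Fin.castSucc)
          = fun p : zeroLocus ℂ I => g ↑p from rfl, hsub]
      exact ((isClosed_zl m I).isClosedEmbedding_subtypeVal).isCompact_preimage hcompact
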